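/- Let r ≥ 2+√3 and set ρ = r + 1/r and q(r) = ρ²/(8ρ − 16). Then: (i) for every Pigou instance G_P(a, n) and every WCR equilibrium x ∈ [0, n] of G_P(a, n) with uncertainty r, SC(x) ≤ q(r)·min_{y∈[0,n]} SC(y); and (ii) there exist a > 0, n > 0 and a WCR equilibrium x of G_P(a, n) with uncertainty r such that SC(x) = q(r)·min_{y∈[0,n]} SC(y). -/

import Mathlib

/-- Social cost in the Pigou instance `G_P(a,n)`: a mass `x ∈ [0,n]` uses resource 2
(with cost `c₂(t) = a·t`) and a mass `n − x` uses resource 1 (with `c₁(t) = 1`), so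
`SC(x) = (n − x) + a·x²`. -/
noncomputable def pigouSC (a n x : ℝ) : ℝ := (n - x) + a * x ^ 2

/-- Worst-case regret of resource 1 in `G_P(a,n)` under uncertainty `r`. -/
noncomputable def pigouWCR1 (a r x : ℝ) : ℝ := 1 - a * x / r

/-- Worst-case regret of resource 2 in `G_P(a,n)` under uncertainty `r`. -/
noncomputable def pigouWCR2 (a r x : ℝ) : ℝ := a * r * x - 1

/-- `x ∈ [0,n]` is a WCR equilibrium of `G_P(a,n)` with uncertainty `r` iff
`(x < n → WCR₁(x) ≤ WCR₂(x))` and `(x > 0 → WCR₂(x) ≤ WCR₁(x))`. -/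
def PigouWCREq (a n r x : ℝ) : Prop :=
  (x < n → pigouWCR1 a r x ≤ pigouWCR2 a r x) ∧
  (0 < x → pigouWCR2 a r x ≤ pigouWCR1 a r x)

/-- `x ∈ [0,n]` is a WCC equilibrium of `G_P(a,n)` with uncertainty `r` iff
`(x > 0 → a·r·x ≤ 1)` and `(x < n → a·r·x ≥ 1)`. -/
def PigouWCCEq (a n r x : ℝ) : Prop :=
  (0 < x → a * r * x ≤ 1) ∧ (x < n → 1 ≤ a * r * x)

/-! The two worst-case regrets differ by `a·x·ρ − 2` with `ρ = r + 1/r`, so an equilibrium either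
satisfies `a·x·ρ = 2` or sits at `x = n` with `a·n·ρ ≤ 2`. In the second case `2·a·n ≤ 1` (as `ρ ≥ 4`),
so `x = n` is already optimal and `q(r) ≥ 1`. In the first case, after multiplying by `a·ρ²`, the
inequality `(8ρ − 16)·SC(x) ≤ ρ²·SC(y)` becomes the sum of squares
`ρ²(ρ − 4)²·a(n − y) + (ρ²·a·y − 4(ρ − 2))² ≥ 0`; both terms vanish for `y = n = 4(ρ − 2)/(a·ρ²)`,
which gives the tight instance. -/

open Real Set

lemma four_le_add_one_div_of_two_add_sqrt_three_le {r : ℝ} (hr : 2 + √3 ≤ r) :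
    4 ≤ r + 1 / r := by
  have hr0 : 0 < r := by linarith [sqrt_nonneg 3]
  have hsq : 3 ≤ (r - 2) ^ 2 := by
    simpa [sq_sqrt] using pow_le_pow_left₀ (sqrt_nonneg 3) (by linarith : √3 ≤ r - 2) 2
  rw [← sub_nonneg, show r + 1 / r - 4 = ((r - 2) ^ 2 - 3) / r by field_simp; ring]
  exact div_nonneg (by linarith) hr0.le

lemma one_le_sq_div_eight_mul_sub {ρ : ℝ} (hρ : 2 < ρ) : 1 ≤ ρ ^ 2 / (8 * ρ - 16) := by
  rw [le_div_iff₀ (by linarith)]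
  nlinarith [sq_nonneg (ρ - 4)]

lemma pigouWCR2_sub_pigouWCR1 (a r x : ℝ) :
    pigouWCR2 a r x - pigouWCR1 a r x = a * x * (r + 1 / r) - 2 := by
  unfold pigouWCR1 pigouWCR2
  ring

lemma pigouWCREq_iff (a n r x : ℝ) :
    PigouWCREq a n r x ↔
      (x < n → 2 ≤ a * x * (r + 1 / r)) ∧ (0 < x → a * x * (r + 1 / r) ≤ 2) := by
  have h := pigouWCR2_sub_pigouWCR1 a r x
  constructor <;> rintro ⟨hlow, hup⟩ <;>
    exact ⟨fun hx => by linarith [hlow hx], fun hx => by linarith [hup hx]⟩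

lemma pigouSC_nonneg {a n y : ℝ} (ha : 0 ≤ a) (hy : y ≤ n) : 0 ≤ pigouSC a n y := by
  unfold pigouSC
  nlinarith [sq_nonneg y]

lemma pigouSC_le_of_two_mul_le_one {a n y : ℝ} (ha : 0 ≤ a) (han : 2 * a * n ≤ 1)
    (hy : y ≤ n) : pigouSC a n n ≤ pigouSC a n y := by
  have h : pigouSC a n y - pigouSC a n n = (n - y) * (1 - a * (n + y)) := by
    unfold pigouSC
    ring
  nlinarith [mul_nonneg (sub_nonneg.2 hy) (by nlinarith : 0 ≤ 1 - a * (n + y))]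

lemma pigouSC_mul_le_of_mul_eq_two {a n x y ρ : ℝ} (ha : 0 < a) (hρ : ρ ≠ 0)
    (hx : a * x * ρ = 2) (hy : y ≤ n) :
    (8 * ρ - 16) * pigouSC a n x ≤ ρ ^ 2 * pigouSC a n y := by
  have key : a * ρ ^ 2 * (ρ ^ 2 * pigouSC a n y - (8 * ρ - 16) * pigouSC a n x) =
      ρ ^ 2 * (ρ - 4) ^ 2 * (a * (n - y)) + (ρ ^ 2 * (a * y) - 4 * (ρ - 2)) ^ 2 := by
    unfold pigouSC
    linear_combination (-(8 * (ρ - 2)) * (a * x * ρ - ρ + 2)) * hx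
  have hpos : 0 ≤ a * ρ ^ 2 * (ρ ^ 2 * pigouSC a n y - (8 * ρ - 16) * pigouSC a n x) := by
    rw [key]
    have : 0 ≤ a * (n - y) := mul_nonneg ha.le (sub_nonneg.2 hy)
    positivity
  have := nonneg_of_mul_nonneg_right hpos (by positivity)
  linarith

theorem pigouSC_le_of_pigouWCREq {a n r x y : ℝ} (hρ : 4 ≤ r + 1 / r) (ha : 0 < a)
    (hn : 0 < n) (hxn : x ≤ n) (heq : PigouWCREq a n r x) (hy : y ≤ n) :
    pigouSC a n x ≤ (r + 1 / r) ^ 2 / (8 * (r + 1 / r) - 16) * pigouSC a n y := by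
  obtain ⟨hlow, hup⟩ := (pigouWCREq_iff a n r x).1 heq
  set ρ := r + 1 / r
  rcases hxn.lt_or_eq with hlt | rfl
  · have hx0 : 0 < x := by
      by_contra! h
      nlinarith [hlow hlt, mul_nonpos_of_nonneg_of_nonpos ha.le h]
    have hx : a * x * ρ = 2 := le_antisymm (hup hx0) (hlow hlt)
    rw [div_mul_eq_mul_div, le_div_iff₀ (by linarith)]
    linarith [pigouSC_mul_le_of_mul_eq_two ha (by positivity) hx hy]
  · have han : 2 * a * x ≤ 1 := by nlinarith [hup hn, mul_pos ha hn]
    calc pigouSC a x x ≤ pigouSC a x y := pigouSC_le_of_two_mul_le_one ha.le han hy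
      _ ≤ ρ ^ 2 / (8 * ρ - 16) * pigouSC a x y :=
        le_mul_of_one_le_left (pigouSC_nonneg ha.le hy) (one_le_sq_div_eight_mul_sub (by linarith))

theorem exists_pigouWCREq_pigouSC_eq {r : ℝ} (hρ : 4 ≤ r + 1 / r) :
    ∃ a n x : ℝ, 0 < a ∧ 0 < n ∧ x ∈ Icc 0 n ∧ PigouWCREq a n r x ∧
      ∃ y ∈ Icc (0 : ℝ) n, (∀ z ∈ Icc (0 : ℝ) n, pigouSC a n y ≤ pigouSC a n z) ∧
        pigouSC a n x = (r + 1 / r) ^ 2 / (8 * (r + 1 / r) - 16) * pigouSC a n y := by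
  set ρ := r + 1 / r
  have hρ0 : 0 < ρ := by linarith
  have hn : 0 < (4 * ρ - 8) / ρ ^ 2 := div_pos (by linarith) (by positivity)
  have hxn : 2 / ρ ≤ (4 * ρ - 8) / ρ ^ 2 := by
    rw [div_le_div_iff₀ hρ0 (by positivity)]
    nlinarith
  have han : 2 * 1 * ((4 * ρ - 8) / ρ ^ 2) ≤ 1 := by
    rw [mul_one, ← mul_div_assoc, div_le_one (by positivity)]
    nlinarith [sq_nonneg (ρ - 4)]
  have hx : 1 * (2 / ρ) * ρ = 2 := by field_simp
  refine ⟨1, _, 2 / ρ, one_pos, hn, ⟨by positivity, hxn⟩, ?_, _, ⟨hn.le, le_rfl⟩,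
    fun z hz => pigouSC_le_of_two_mul_le_one zero_le_one han hz.2, ?_⟩
  · exact (pigouWCREq_iff _ _ _ _).2 ⟨fun _ => hx.ge, fun _ => hx.le⟩
  · have hD : 8 * ρ - 16 ≠ 0 := by linarith
    unfold pigouSC
    rw [div_mul_eq_mul_div, eq_div_iff hD]
    field_simp
    ring

/-- For `r ≥ 2+√3` and `q(r) = ρ²/(8ρ − 16)` with `ρ = r + 1/r`:
(i) every WCR equilibrium of every Pigou instance has social cost at most `q(r)` times the
optimal social cost; (ii) this bound is tight for some Pigou instance and WCR equilibrium. -/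
theorem stmt_8 (r : ℝ) (hr : 2 + Real.sqrt 3 ≤ r) :
    (∀ a n x : ℝ, 0 < a → 0 < n → x ∈ Set.Icc 0 n → PigouWCREq a n r x →
      ∀ y ∈ Set.Icc (0 : ℝ) n,
        pigouSC a n x ≤ (r + 1 / r) ^ 2 / (8 * (r + 1 / r) - 16) * pigouSC a n y) ∧
    (∃ a n x : ℝ, 0 < a ∧ 0 < n ∧ x ∈ Set.Icc 0 n ∧ PigouWCREq a n r x ∧
      ∃ y ∈ Set.Icc (0 : ℝ) n, (∀ z ∈ Set.Icc (0 : ℝ) n, pigouSC a n y ≤ pigouSC a n z) ∧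
        pigouSC a n x = (r + 1 / r) ^ 2 / (8 * (r + 1 / r) - 16) * pigouSC a n y) := by
  have hρ := four_le_add_one_div_of_two_add_sqrt_three_le hr
  exact ⟨fun a n x ha hn hx heq y hy => pigouSC_le_of_pigouWCREq hρ ha hn hx.2 heq hy.2,
    exists_pigouWCREq_pigouSC_eq hρ⟩
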